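/- For an n-ary Nambu-Lie superalgebra N and N-module V, the space W = {x₁∧⋯∧x_{n-2}∧v : xᵢ ∈ N, v ∈ V} with the action [x, y₁∧⋯∧y_{n-2}∧v]_W = Σ_{i=1}^{n-2} (−1)^{|x|(|y₁|+⋯+|y_{i-1}|)} y₁∧⋯∧ad(x)(yᵢ)∧⋯∧y_{n-2}∧v + (−1)^{|x|(|y₁|+⋯+|y_{n-2}|)} y₁∧⋯∧y_{n-2}∧ad(x)(v) is a module over the Leibniz superalgebra (L(N),[·,·]_L), i.e. [[x,y]_L, w]_W = [x,[y,w]_W]_W − (−1)^{|x||y|}[y,[x,w]_W]_W. -/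

import Mathlib

/-!
On a generator `u₁ ∧ ⋯ ∧ u_k ⊗ v` of `W`, an element `x` of `L(N)` acts as the super-derivation
extending the pair `(ad x, [x, ·]_V)` by the Leibniz rule. The supercommutator of two such
super-derivations extends the supercommutators of the pairs: the terms in which the two act on
different factors cancel in pairs, and only the terms where both act on the same factor survive.
The Nambu identity and the second representation identity say that those supercommutators are
`ad [x, y]_L` and `[[x, y]_L, ·]_V`, so `[x, y]_L` acts on `W` by the supercommutator.
-/

open Finset

noncomputable section

/-- The sign `(-1)^a` associated to a parity `a ∈ ℤ/2ℤ`. -/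
def sgn (a : ZMod 2) : ℂ := (-1 : ℂ) ^ a.val

/-- Partial sum of parities `Σ_{j < i} p j`. -/
def psum {m : ℕ} (p : Fin m → ZMod 2) (i : Fin m) : ZMod 2 :=
  ∑ j ∈ Finset.univ.filter (fun j => j < i), p j

/-- Tail sum of parities `Σ_{j > i} p j`. -/
def tlsum {m : ℕ} (p : Fin m → ZMod 2) (i : Fin m) : ZMod 2 :=
  ∑ j ∈ Finset.univ.filter (fun j => i < j), p j

/-- An `(m+1)`-ary Nambu-Lie superalgebra over `ℂ`: a `ℤ/2`-graded space with an even,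
skew-supersymmetric `(m+1)`-linear bracket satisfying the super Nambu identity. -/
structure NambuLieSuper (m : ℕ) (N : Type) [AddCommGroup N] [Module ℂ N] where
  grading : ZMod 2 → Submodule ℂ N
  bracket : MultilinearMap ℂ (fun _ : Fin (m+1) => N) N
  bracket_even : ∀ (p : Fin (m+1) → ZMod 2) (x : Fin (m+1) → N),
      (∀ i, x i ∈ grading (p i)) → bracket x ∈ grading (∑ i, p i)
  skew : ∀ (p : Fin (m+1) → ZMod 2) (x : Fin (m+1) → N),
      (∀ i, x i ∈ grading (p i)) → ∀ i j : Fin (m+1), (i : ℕ) + 1 = (j : ℕ) →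
      bracket (x ∘ Equiv.swap i j) = - sgn (p i * p j) • bracket x
  nambu : ∀ (p : Fin (m+1) → ZMod 2) (q : Fin m → ZMod 2)
      (x : Fin (m+1) → N) (y : Fin m → N),
      (∀ i, x i ∈ grading (p i)) → (∀ j, y j ∈ grading (q j)) →
      bracket (Fin.snoc y (bracket x)) =
        ∑ i, sgn ((∑ j, q j) * psum p i) •
          bracket (Function.update x i (bracket (Fin.snoc y (x i))))

namespace NambuLieSuper

variable {m : ℕ} {N : Type} [AddCommGroup N] [Module ℂ N]

/-- The inner map `ad(y₁,…,y_m)(z) = [y₁,…,y_m,z]`. -/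
def ad (A : NambuLieSuper m N) (y : Fin m → N) (z : N) : N :=
  A.bracket (Fin.snoc y z)

/-- `D` is a derivation of parity `dp` of the Nambu-Lie superalgebra `A`. -/
def IsDerivation (A : NambuLieSuper m N) (dp : ZMod 2) (D : N → N) : Prop :=
  IsLinearMap ℂ D ∧
  (∀ j : ZMod 2, ∀ x ∈ A.grading j, D x ∈ A.grading (j + dp)) ∧
  ∀ (p : Fin (m+1) → ZMod 2) (x : Fin (m+1) → N),
    (∀ i, x i ∈ A.grading (p i)) →
    D (A.bracket x) =
      ∑ k, sgn (dp * psum p k) • A.bracket (Function.update x k (D (x k)))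

end NambuLieSuper

/-- A module (representation) over an `(k+2)`-ary Nambu-Lie superalgebra `A`:
a graded space `V` with an even multilinear action `[·,…,·]_V : N^{k+1} × V → V`
satisfying the two representation identities. -/
structure NambuModule {k : ℕ} {N : Type} [AddCommGroup N] [Module ℂ N]
    (A : NambuLieSuper (k+1) N) (V : Type) [AddCommGroup V] [Module ℂ V] where
  vgrading : ZMod 2 → Submodule ℂ V
  act : MultilinearMap ℂ (fun _ : Fin (k+1) => N) (V →ₗ[ℂ] V)
  act_even : ∀ (p : Fin (k+1) → ZMod 2) (x : Fin (k+1) → N) (j : ZMod 2) (v : V),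
      (∀ i, x i ∈ A.grading (p i)) → v ∈ vgrading j → act x v ∈ vgrading ((∑ i, p i) + j)
  rep1 : ∀ (p : Fin (k+2) → ZMod 2) (x : Fin (k+2) → N)
      (q : Fin k → ZMod 2) (y : Fin k → N) (v : V),
      (∀ i, x i ∈ A.grading (p i)) → (∀ j, y j ∈ A.grading (q j)) →
      act (Fin.cons (A.bracket x) y) v =
        ∑ i : Fin (k+2),
          ((-1 : ℂ) ^ ((k+1) - (i : ℕ)) * sgn (p i * tlsum p i)) •
            act (i.removeNth x) (act (Fin.cons (x i) y) v)
  rep2 : ∀ (p q : Fin (k+1) → ZMod 2) (x y : Fin (k+1) → N) (v : V),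
      (∀ i, x i ∈ A.grading (p i)) → (∀ j, y j ∈ A.grading (q j)) →
      ∑ i : Fin (k+1), sgn ((∑ j, q j) * psum p i) •
          act (Function.update x i (A.ad y (x i))) v =
        act y (act x v) - sgn ((∑ j, q j) * (∑ j, p j)) • act x (act y v)

open Function

lemma sgn_add (a b : ZMod 2) : sgn (a + b) = sgn a * sgn b := by
  simp only [sgn, ZMod.val_add, ← pow_add]
  exact (neg_one_pow_eq_pow_mod_two (R := ℂ) _).symm

lemma sgn_mul_self (a : ZMod 2) : sgn a * sgn a = 1 := by
  rw [← sgn_add, CharTwo.add_self_eq_zero]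
  simp [sgn]

lemma update_add_self_eq_add_single {ι M : Type*} [DecidableEq ι] [AddCommMonoid M]
    (r : ι → M) (i : ι) (c : M) : update r i (r i + c) = r + Pi.single i c := by
  ext j
  rcases eq_or_ne j i with rfl | h <;> simp [*]

lemma sum_update_add_self {ι M : Type*} [Fintype ι] [DecidableEq ι] [AddCommMonoid M]
    (r : ι → M) (i : ι) (c : M) : ∑ j, update r i (r i + c) j = ∑ j, r j + c := by
  simp [update_add_self_eq_add_single, sum_add_distrib]

lemma psum_update_add_self {m : ℕ} (r : Fin m → ZMod 2) (i j : Fin m) (c : ZMod 2) :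
    psum (update r i (r i + c)) j = psum r j + if i < j then c else 0 := by
  simp [psum, update_add_self_eq_add_single, sum_add_distrib, sum_pi_single']

lemma update_mem_update {ι κ α σ : Type*} [DecidableEq ι] [SetLike σ α] {S : κ → σ}
    {u : ι → α} {r : ι → κ} (hu : ∀ j, u j ∈ S (r j)) (i : ι) {c : κ} {z : α}
    (hz : z ∈ S c) (j : ι) : update u i z j ∈ S (update r i c j) := by
  rcases eq_or_ne j i with rfl | h <;> simp [*]

lemma psum_snoc_castSucc {m : ℕ} (q : Fin m → ZMod 2) (c : ZMod 2) (i : Fin m) :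
    psum (Fin.snoc q c) i.castSucc = psum q i := by
  simp [psum, sum_filter, Fin.sum_univ_castSucc, (Fin.castSucc_lt_last i).not_gt]

lemma psum_snoc_last {m : ℕ} (q : Fin m → ZMod 2) (c : ZMod 2) :
    psum (Fin.snoc q c) (Fin.last m) = ∑ j, q j := by
  simp [psum, sum_filter, Fin.sum_univ_castSucc, Fin.castSucc_lt_last]

lemma snoc_mem_snoc {m : ℕ} {κ α σ : Type*} [SetLike σ α] {S : κ → σ} {u : Fin m → α}
    {r : Fin m → κ} (hu : ∀ j, u j ∈ S (r j)) {c : κ} {z : α} (hz : z ∈ S c) (j : Fin (m+1)) :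
    (Fin.snoc u z : Fin (m+1) → α) j ∈ S ((Fin.snoc r c : Fin (m+1) → κ) j) :=
  Fin.lastCases (by simpa using hz) (fun i => by simpa using hu i) j

namespace NambuLieSuper

variable {m : ℕ} {N : Type} [AddCommGroup N] [Module ℂ N] (A : NambuLieSuper m N)
  {p q : Fin m → ZMod 2} {x y : Fin m → N} {c : ZMod 2} {z : N}

lemma ad_mem_grading (hx : ∀ i, x i ∈ A.grading (p i)) (hz : z ∈ A.grading c) :
    A.ad x z ∈ A.grading (c + ∑ j, p j) := by
  have h := A.bracket_even _ _ (snoc_mem_snoc hx hz)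
  simpa [ad, Fin.sum_univ_castSucc, add_comm c] using h

/-- The Nambu identity: `ad [x, y]_L` is the supercommutator of `ad x` and `ad y`. -/
lemma sum_ad_update_ad (hx : ∀ i, x i ∈ A.grading (p i)) (hy : ∀ j, y j ∈ A.grading (q j))
    (hz : z ∈ A.grading c) :
    ∑ i, sgn ((∑ j, p j) * psum q i) • A.ad (update y i (A.ad x (y i))) z =
      A.ad x (A.ad y z) - sgn ((∑ j, p j) * ∑ j, q j) • A.ad y (A.ad x z) := by
  have h := A.nambu _ p _ x (snoc_mem_snoc hy hz) hx
  rw [Fin.sum_univ_castSucc] at h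
  simp only [Fin.snoc_castSucc, Fin.snoc_last, ← Fin.snoc_update, psum_snoc_castSucc,
    psum_snoc_last, Fin.update_snoc_last] at h
  rw [eq_sub_iff_add_eq]
  exact h.symm

end NambuLieSuper

lemma NambuModule.act_mem_vgrading {k : ℕ} {N V : Type} [AddCommGroup N] [Module ℂ N]
    [AddCommGroup V] [Module ℂ V] {A : NambuLieSuper (k+1) N} (M : NambuModule A V)
    {p : Fin (k+1) → ZMod 2} {x : Fin (k+1) → N} (hx : ∀ i, x i ∈ A.grading (p i))
    {c : ZMod 2} {w : V} (hw : w ∈ M.vgrading c) : M.act x w ∈ M.vgrading (c + ∑ j, p j) := by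
  rw [add_comm]
  exact M.act_even p x c w hx hw

section SuperDerivation

variable {N V E : Type*} [AddCommGroup N] [Module ℂ N] [AddCommGroup V] [Module ℂ V]
  [AddCommGroup E] [Module ℂ E] {k : ℕ} (T : MultilinearMap ℂ (fun _ : Fin k => N) (V →ₗ[ℂ] E))

/-- The action on `T u v` (in the application, `u₁ ∧ ⋯ ∧ u_k ⊗ v`) of the pair `(f, g)` extended
by the super Leibniz rule; `r` lists the parities of the `u j` and `P` is the parity of `(f, g)`. -/
def superDerivAction (P : ZMod 2) (f : N → N) (g : V → V) (r : Fin k → ZMod 2) (u : Fin k → N)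
    (v : V) : E :=
  ∑ j, sgn (P * psum r j) • T (update u j (f (u j))) v + sgn (P * ∑ j, r j) • T u (g v)

def ActsAsSuperDeriv (SN : ZMod 2 → Submodule ℂ N) (SV : ZMod 2 → Submodule ℂ V)
    (Φ : E →ₗ[ℂ] E) (P : ZMod 2) (f : N → N) (g : V → V) : Prop :=
  ∀ (r : Fin k → ZMod 2) (u : Fin k → N) (pv : ZMod 2) (v : V),
    (∀ j, u j ∈ SN (r j)) → v ∈ SV pv → Φ (T u v) = superDerivAction T P f g r u v

/-- The term of `Φ₁ (Φ₂ (T u v))` in which `f₂` acts on slot `j` and then `f₁` on slot `l`. -/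
def secondOrderTerm (P₁ : ZMod 2) (f₁ : N → N) (P₂ : ZMod 2) (f₂ : N → N) (r : Fin k → ZMod 2)
    (u : Fin k → N) (v : V) (j l : Fin k) : E :=
  (sgn (P₂ * psum r j) * sgn (P₁ * psum (update r j (r j + P₂)) l)) •
    T (update (update u j (f₂ (u j))) l (f₁ (update u j (f₂ (u j)) l))) v

variable {P P₁ P₂ : ZMod 2} {f f' f₁ f₂ : N → N} {g g' g₁ g₂ : V → V} {r : Fin k → ZMod 2}
  {u : Fin k → N} {v : V}

lemma superDerivAction_congr (hf : ∀ j, f (u j) = f' (u j)) (hg : g v = g' v) :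
    superDerivAction T P f g r u v = superDerivAction T P f' g' r u v := by
  simp only [superDerivAction, hf, hg]

lemma sum_smul_superDerivAction {ι : Type*} (s : Finset ι) (c : ι → ℂ) (f : ι → N → N)
    (g : ι → V → V) :
    ∑ i ∈ s, c i • superDerivAction T P (f i) (g i) r u v =
      superDerivAction T P (fun z => ∑ i ∈ s, c i • f i z) (fun w => ∑ i ∈ s, c i • g i w)
        r u v := by
  simp only [superDerivAction, ← MultilinearMap.toLinearMap_apply, map_sum, map_smul,
    LinearMap.sum_apply, LinearMap.smul_apply, smul_add, sum_add_distrib, smul_sum, smul_smul]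
  rw [sum_comm]
  simp only [mul_comm]

lemma superDerivAction_sub_smul (c : ℂ) :
    superDerivAction T P (fun z => f z - c • f' z) (fun w => g w - c • g' w) r u v =
      superDerivAction T P f g r u v - c • superDerivAction T P f' g' r u v := by
  simp only [superDerivAction, ← MultilinearMap.toLinearMap_apply, map_sub, map_smul,
    LinearMap.sub_apply, LinearMap.smul_apply]
  simp only [smul_sub, smul_add, smul_sum, smul_comm c, sum_sub_distrib]
  abel

lemma secondOrderTerm_self (j : Fin k) :
    secondOrderTerm T P₁ f₁ P₂ f₂ r u v j j =
      sgn ((P₁ + P₂) * psum r j) • T (update u j (f₁ (f₂ (u j)))) v := by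
  rw [secondOrderTerm, update_self, update_idem, psum_update_add_self, if_neg (lt_irrefl j),
    add_zero, ← sgn_add, add_mul, add_comm (P₂ * _)]

lemma secondOrderTerm_swap {j l : Fin k} (h : j ≠ l) :
    secondOrderTerm T P₁ f₁ P₂ f₂ r u v j l =
      sgn (P₁ * P₂) • secondOrderTerm T P₂ f₂ P₁ f₁ r u v l j := by
  simp only [secondOrderTerm, update_of_ne h, update_of_ne h.symm, update_comm h, smul_smul,
    psum_update_add_self, ← sgn_add]
  congr 2
  rcases h.lt_or_gt with hjl | hlj
  · rw [if_pos hjl, if_neg hjl.not_gt]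
    ring
  · rw [if_neg hlj.not_gt, if_pos hlj]
    grind

variable {SN : ZMod 2 → Submodule ℂ N} {SV : ZMod 2 → Submodule ℂ V} {Φ₁ Φ₂ : E →ₗ[ℂ] E}
  {pv : ZMod 2}

lemma ActsAsSuperDeriv.apply_superDerivAction (h₁ : ActsAsSuperDeriv T SN SV Φ₁ P₁ f₁ g₁)
    (hf₂ : ∀ c z, z ∈ SN c → f₂ z ∈ SN (c + P₂)) (hg₂ : ∀ c w, w ∈ SV c → g₂ w ∈ SV (c + P₂))
    (hu : ∀ j, u j ∈ SN (r j)) (hv : v ∈ SV pv) :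
    Φ₁ (superDerivAction T P₂ f₂ g₂ r u v) =
      ∑ j, ∑ l, secondOrderTerm T P₁ f₁ P₂ f₂ r u v j l
        + sgn (P₁ * P₂) • ∑ j, (sgn (P₁ * ∑ i, r i) * sgn (P₂ * psum r j)) •
            T (update u j (f₂ (u j))) (g₁ v)
        + ∑ j, (sgn (P₂ * ∑ i, r i) * sgn (P₁ * psum r j)) • T (update u j (f₁ (u j))) (g₂ v)
        + sgn ((P₁ + P₂) * ∑ i, r i) • T u (g₁ (g₂ v)) := by
  have hslot : ∀ j, Φ₁ (T (update u j (f₂ (u j))) v) =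
      superDerivAction T P₁ f₁ g₁ (update r j (r j + P₂)) (update u j (f₂ (u j))) v :=
    fun j => h₁ _ _ _ _ (update_mem_update hu j (hf₂ _ _ (hu j))) hv
  have hvec : Φ₁ (T u (g₂ v)) = superDerivAction T P₁ f₁ g₁ r u (g₂ v) :=
    h₁ _ _ _ _ hu (hg₂ _ _ hv)
  have hmixed : ∀ j, sgn (P₂ * psum r j) * sgn (P₁ * (∑ i, r i + P₂)) =
      sgn (P₁ * P₂) * (sgn (P₁ * ∑ i, r i) * sgn (P₂ * psum r j)) := by
    intro j
    simp only [← sgn_add]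
    congr 1
    ring
  have hlast : sgn (P₂ * ∑ i, r i) * sgn (P₁ * ∑ i, r i) = sgn ((P₁ + P₂) * ∑ i, r i) := by
    rw [← sgn_add]
    congr 1
    ring
  simp only [superDerivAction, secondOrderTerm, map_add, map_sum, map_smul, hslot, hvec,
    sum_update_add_self, smul_add, smul_sum, smul_smul, sum_add_distrib, hmixed, hlast]
  abel

theorem ActsAsSuperDeriv.supercommutator (h₁ : ActsAsSuperDeriv T SN SV Φ₁ P₁ f₁ g₁)
    (h₂ : ActsAsSuperDeriv T SN SV Φ₂ P₂ f₂ g₂)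
    (hf₁ : ∀ c z, z ∈ SN c → f₁ z ∈ SN (c + P₁)) (hg₁ : ∀ c w, w ∈ SV c → g₁ w ∈ SV (c + P₁))
    (hf₂ : ∀ c z, z ∈ SN c → f₂ z ∈ SN (c + P₂)) (hg₂ : ∀ c w, w ∈ SV c → g₂ w ∈ SV (c + P₂))
    (hu : ∀ j, u j ∈ SN (r j)) (hv : v ∈ SV pv) :
    Φ₁ (Φ₂ (T u v)) - sgn (P₁ * P₂) • Φ₂ (Φ₁ (T u v)) =
      superDerivAction T (P₁ + P₂) (f₁ ∘ f₂) (g₁ ∘ g₂) r u v -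
        sgn (P₁ * P₂) • superDerivAction T (P₁ + P₂) (f₂ ∘ f₁) (g₂ ∘ g₁) r u v := by
  have hsecond : ∑ j, ∑ l, secondOrderTerm T P₁ f₁ P₂ f₂ r u v j l -
      sgn (P₁ * P₂) • ∑ j, ∑ l, secondOrderTerm T P₂ f₂ P₁ f₁ r u v j l =
      ∑ j, sgn ((P₁ + P₂) * psum r j) • T (update u j (f₁ (f₂ (u j)))) v -
        sgn (P₁ * P₂) • ∑ j, sgn ((P₁ + P₂) * psum r j) • T (update u j (f₂ (f₁ (u j)))) v := by
    rw [sum_comm]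
    simp only [smul_sum, ← sum_sub_distrib]
    refine sum_congr rfl fun l _ => ?_
    rw [sum_eq_single l (fun j _ hjl => by rw [secondOrderTerm_swap T hjl, sub_self]) (by simp),
      secondOrderTerm_self, secondOrderTerm_self, add_comm P₂]
  rw [h₂ r u pv v hu hv, h₁ r u pv v hu hv, h₁.apply_superDerivAction T hf₂ hg₂ hu hv,
    h₂.apply_superDerivAction T hf₁ hg₁ hu hv, add_comm P₂ P₁, mul_comm P₂ P₁]
  simp only [superDerivAction, comp_apply]
  linear_combination (norm := module) hsecond - (sgn_mul_self (P₁ * P₂)) •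
    ∑ j, (sgn (P₂ * ∑ i, r i) * sgn (P₁ * psum r j)) • T (update u j (f₁ (u j))) (g₂ v)

end SuperDerivation

open ExteriorAlgebra TensorProduct in
/-- `W = ∧^{n-2}N ∧ V` (realized as wedges tensored with `V`), with the action
`[x, y₁∧⋯∧y_{n-2}∧v]_W = Σᵢ ± y₁∧⋯∧ad(x)(yᵢ)∧⋯∧v + ± y₁∧⋯∧y_{n-2}∧ad(x)(v)`,
is a module over the Leibniz superalgebra `(L(N), [·,·]_L)`:
`[[x,y]_L, w]_W = [x,[y,w]_W]_W − (−1)^{|x||y|}[y,[x,w]_W]_W` on homogeneous generators. -/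
theorem w_leibniz_module {k : ℕ} {N V : Type} [AddCommGroup N] [Module ℂ N]
    [AddCommGroup V] [Module ℂ V]
    (A : NambuLieSuper (k+1) N) (M : NambuModule A V)
    (lb : ExteriorAlgebra ℂ N →ₗ[ℂ] ExteriorAlgebra ℂ N →ₗ[ℂ] ExteriorAlgebra ℂ N)
    (hlb : ∀ (p q : Fin (k+1) → ZMod 2) (x y : Fin (k+1) → N),
      (∀ i, x i ∈ A.grading (p i)) → (∀ j, y j ∈ A.grading (q j)) →
      lb (ιMulti ℂ (k+1) x) (ιMulti ℂ (k+1) y) =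
        ∑ i : Fin (k+1), sgn ((∑ j, p j) * psum q i) •
          ιMulti ℂ (k+1) (Function.update y i (A.ad x (y i))))
    (actW : ExteriorAlgebra ℂ N →ₗ[ℂ]
      (ExteriorAlgebra ℂ N ⊗[ℂ] V) →ₗ[ℂ] (ExteriorAlgebra ℂ N ⊗[ℂ] V))
    (hactW : ∀ (p : Fin (k+1) → ZMod 2) (x : Fin (k+1) → N)
        (q : Fin k → ZMod 2) (y : Fin k → N) (pv : ZMod 2) (v : V),
      (∀ i, x i ∈ A.grading (p i)) → (∀ j, y j ∈ A.grading (q j)) → v ∈ M.vgrading pv →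
      actW (ιMulti ℂ (k+1) x) (ιMulti ℂ k y ⊗ₜ[ℂ] v) =
        (∑ i : Fin k, sgn ((∑ j, p j) * psum q i) •
            (ιMulti ℂ k (Function.update y i (A.ad x (y i))) ⊗ₜ[ℂ] v))
          + sgn ((∑ j, p j) * (∑ j, q j)) • (ιMulti ℂ k y ⊗ₜ[ℂ] (M.act x v)))
    (p q : Fin (k+1) → ZMod 2) (x y : Fin (k+1) → N)
    (r : Fin k → ZMod 2) (u : Fin k → N) (pv : ZMod 2) (v : V)
    (hx : ∀ i, x i ∈ A.grading (p i)) (hy : ∀ j, y j ∈ A.grading (q j))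
    (hu : ∀ j, u j ∈ A.grading (r j)) (hv : v ∈ M.vgrading pv) :
    actW (lb (ιMulti ℂ (k+1) x) (ιMulti ℂ (k+1) y)) (ιMulti ℂ k u ⊗ₜ[ℂ] v) =
      actW (ιMulti ℂ (k+1) x) (actW (ιMulti ℂ (k+1) y) (ιMulti ℂ k u ⊗ₜ[ℂ] v))
        - sgn ((∑ j, p j) * (∑ j, q j)) •
            actW (ιMulti ℂ (k+1) y) (actW (ιMulti ℂ (k+1) x) (ιMulti ℂ k u ⊗ₜ[ℂ] v)) := by
  let T := (TensorProduct.mk ℂ (ExteriorAlgebra ℂ N) V).compMultilinearMap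
    (ιMulti ℂ k).toMultilinearMap
  have hT : ∀ u v, ιMulti ℂ k u ⊗ₜ[ℂ] v = T u v := fun _ _ => rfl
  have hact : ∀ {p : Fin (k+1) → ZMod 2} {x : Fin (k+1) → N}, (∀ i, x i ∈ A.grading (p i)) →
      ActsAsSuperDeriv T A.grading M.vgrading (actW (ιMulti ℂ (k+1) x)) (∑ j, p j) (A.ad x)
        (M.act x) :=
    fun hx r u pv v hu hv => hactW _ _ r u pv v hx hu hv
  have hgen : ∀ i, actW (ιMulti ℂ (k+1) (update y i (A.ad x (y i)))) (T u v) =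
      superDerivAction T (∑ j, q j + ∑ j, p j) (A.ad (update y i (A.ad x (y i))))
        (M.act (update y i (A.ad x (y i)))) r u v := by
    intro i
    rw [← sum_update_add_self]
    exact hact (update_mem_update hy i (A.ad_mem_grading hx (hy i))) r u pv v hu hv
  simp only [hT]
  rw [hlb p q x y hx hy, map_sum, LinearMap.sum_apply]
  simp only [map_smul, LinearMap.smul_apply, hgen]
  rw [sum_smul_superDerivAction,
    superDerivAction_congr T (f' := fun z => A.ad x (A.ad y z) - _ • A.ad y (A.ad x z))
      (g' := fun w => M.act x (M.act y w) - _ • M.act y (M.act x w))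
      (fun j => A.sum_ad_update_ad hx hy (hu j)) (M.rep2 q p y x v hy hx),
    superDerivAction_sub_smul, add_comm]
  exact ((hact hx).supercommutator T (hact hy) (fun _ _ => A.ad_mem_grading hx)
    (fun _ _ => M.act_mem_vgrading hx) (fun _ _ => A.ad_mem_grading hy)
    (fun _ _ => M.act_mem_vgrading hy) hu hv).symm
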